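/- arXiv:1804.05982 — 6 statements merged into one kernel-verified Lean document; each statement's English description precedes it below -/
import Mathlib

section
/- In a many-to-one market with responsive preferences, let μ and μ' be stable matchings and suppose student s strictly prefers μ'(s) to μ(s). Then s lies on a preference cycle s₀c₀s₁c₁…s_k c_k s₀ (alternating students and colleges, all distinct, each agent strictly preferring its successor to its predecessor) such that for every student s_i in the cycle, μ(s_i) is its predecessor and μ'(s_i) is its successor, and every college in the cycle is filled to its full capacity in both μ and μ'. -/
/-! Many-to-one matching framework (students `S` and colleges `C`).

Each student has a strict preference order over `C ∪ {∅}` and each college a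
strict (responsive) ranking of `S ∪ {∅}`, both encoded by injective rank
functions into `ℕ` (larger = more preferred); `none` is the outside option.
A matching is a function `μ : S → Option C`; the set of students assigned to a
college is recovered by `assignedSet`. -/

variable {S C : Type*} [Fintype S] [DecidableEq S] [DecidableEq C]

def assignedSet (μ : S → Option C) (c : C) [Fintype S] [DecidableEq S] [DecidableEq C] :
    Finset S :=
  Finset.univ.filter (fun s => μ s = some c)

structure MPrefs (S C : Type*) where
  prS : S → Option C → ℕ
  prC : C → Option S → ℕ
  injS : ∀ s, Function.Injective (prS s)
  injC : ∀ c, Function.Injective (prC c)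

def MIndivRational (P : MPrefs S C) (q : C → ℕ) (μ : S → Option C) : Prop :=
  (∀ s c, μ s = some c → P.prS s none < P.prS s (some c) ∧ P.prC c none < P.prC c (some s)) ∧
  ∀ c, (assignedSet μ c).card ≤ q c

def MBlocks (P : MPrefs S C) (q : C → ℕ) (μ : S → Option C) (s : S) (c : C) : Prop :=
  P.prS s (μ s) < P.prS s (some c) ∧
  ((∃ s' ∈ assignedSet μ c, P.prC c (some s') < P.prC c (some s)) ∨
   (P.prC c none < P.prC c (some s) ∧ (assignedSet μ c).card < q c))

def MStable (P : MPrefs S C) (q : C → ℕ) (μ : S → Option C) : Prop :=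
  MIndivRational P q μ ∧ ∀ s c, ¬ MBlocks P q μ s c

/-! Let `T` be the set of students who strictly prefer `μ'` to `μ`. If `a ∈ T` goes to `c` under
`μ'`, stability of `μ` forces `c` to be full under `μ` and to prefer each of its `μ`-students to
`a`; stability of `μ'` then forces every student who leaves `c` to lie in `T`. Hence at every
college at least as many students of `T` leave as arrive, and summing over the colleges that
receive students of `T` shows that these are full under `μ'` as well. So there is an injection
`f : T → T` with `μ (f a) = μ' a`. Reading a student `a` as an edge from `μ a` to `μ' a`, the
orbit of `s` under `f` is a closed walk through `s`, and shortcutting it at repeated colleges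
leaves a cycle through `s` whose colleges are distinct. -/

open Function Set

section ClosedWalk

variable {E V : Type*} {src tgt : E → V} {p : ℕ} {w : ℕ → E}

structure IsClosedWalk (src tgt : E → V) (p : ℕ) (w : ℕ → E) : Prop where
  pos : 0 < p
  periodic : Periodic w p
  chain : ∀ n, tgt (w n) = src (w (n + 1))

theorem IsClosedWalk.rotate (hw : IsClosedWalk src tgt p w) (m : ℕ) :
    IsClosedWalk src tgt p (fun n => w (n + m)) where
  pos := hw.pos
  periodic := hw.periodic.add_const m
  chain n := by simpa only [add_right_comm] using hw.chain (n + m)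

theorem IsClosedWalk.truncate (hw : IsClosedWalk src tgt p w) {j : ℕ}
    (hj : tgt (w j) = src (w 0)) : IsClosedWalk src tgt (j + 1) (fun n => w (n % (j + 1))) where
  pos := Nat.add_one_pos j
  periodic n := by simp only [Nat.add_mod_right]
  chain n := by
    rcases (Nat.lt_add_one_iff.1 (n.mod_lt (Nat.add_one_pos j))).lt_or_eq with hlt | heq
    · rw [Nat.add_mod_eq_ite, Nat.one_mod_eq_one.2 (by omega), if_neg (by omega)]
      exact hw.chain _
    · simp only [heq, Nat.succ_mod_succ_eq_zero_iff.2 heq, hj]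

/-- Rotate `w` to start right after position `j`, cut it after the copy of position `i` (allowed
since `tgt (w i) = tgt (w j)`), and rotate back so that it starts at `w 0` again. -/
theorem IsClosedWalk.shortcut (hw : IsClosedWalk src tgt p w) {i j : ℕ} (hij : i < j)
    (hjp : j < p) (hdup : tgt (w i) = tgt (w j)) :
    ∃ p' < p, ∃ w', IsClosedWalk src tgt p' w' ∧ w' 0 = w 0 ∧ range w' ⊆ range w := by
  have hclose : tgt (w (p - (j + 1) + i + (j + 1))) = src (w (0 + (j + 1))) := by
    rw [show p - (j + 1) + i + (j + 1) = i + p by omega, hw.periodic, hdup, zero_add, hw.chain]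
  refine ⟨p - (j + 1) + i + 1, by omega, _,
    ((hw.rotate (j + 1)).truncate hclose).rotate (p - (j + 1)), ?_, fun _ ⟨n, hn⟩ => ⟨_, hn⟩⟩
  simp only [zero_add]
  rw [Nat.mod_eq_of_lt (by omega), Nat.sub_add_cancel hjp, ← zero_add p, hw.periodic]

theorem IsClosedWalk.exists_injOn (hw : IsClosedWalk src tgt p w) :
    ∃ p' w', IsClosedWalk src tgt p' w' ∧ InjOn (tgt ∘ w') (Iio p') ∧ w' 0 = w 0 ∧
      range w' ⊆ range w := by
  induction p using Nat.strong_induction_on generalizing w with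
  | _ p ih =>
  by_cases hinj : InjOn (tgt ∘ w) (Iio p)
  · exact ⟨p, w, hw, hinj, rfl, subset_rfl⟩
  obtain ⟨i, hi, j, hj, hdup, hne⟩ : ∃ i < p, ∃ j < p, tgt (w i) = tgt (w j) ∧ i ≠ j := by
    simpa [InjOn] using hinj
  obtain ⟨p', hp', w', hw', h0, hrange⟩ : ∃ p' < p, ∃ w', IsClosedWalk src tgt p' w' ∧
      w' 0 = w 0 ∧ range w' ⊆ range w := by
    rcases hne.lt_or_gt with hlt | hlt
    · exact hw.shortcut hlt hj hdup
    · exact hw.shortcut hlt hi hdup.symm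
  obtain ⟨p'', w'', hw'', hinj'', h0', hrange'⟩ := ih p' hp' hw'
  exact ⟨p'', w'', hw'', hinj'', h0'.trans h0, hrange'.trans hrange⟩

theorem IsClosedWalk.exists_simple_cycle (hw : IsClosedWalk src tgt p w) :
    ∃ (k : ℕ) (c : Fin (k + 1) → E), Injective (tgt ∘ c) ∧ (∀ i, tgt (c i) = src (c (i + 1))) ∧
      c 0 = w 0 ∧ ∀ i, c i ∈ range w := by
  obtain ⟨p', w', hw', hinj, h0, hrange⟩ := hw.exists_injOn
  obtain ⟨k, rfl⟩ : ∃ k, p' = k + 1 := Nat.exists_eq_add_one.2 hw'.pos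
  refine ⟨k, fun i => w' i, fun i j hij => Fin.ext (hinj i.isLt j.isLt hij), fun i => ?_, h0,
    fun i => hrange ⟨i, rfl⟩⟩
  change tgt (w' i) = src (w' ↑(i + 1))
  rw [hw'.chain, Fin.val_add_one]
  split_ifs with hi
  · simp [hi, ← hw'.periodic 0]
  · rfl

theorem exists_isClosedWalk_iterate {T : Set E} [Finite T] {f : E → E} (hinj : InjOn f T)
    (hmaps : MapsTo f T T) (hstep : ∀ a ∈ T, tgt a = src (f a)) {x : E} (hx : x ∈ T) :
    ∃ p, IsClosedWalk src tgt p (fun n => f^[n] x) := by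
  obtain ⟨p, hp, hper⟩ := (hmaps.restrict_inj.2 hinj).mem_periodicPts ⟨x, hx⟩
  refine ⟨p, hp, fun n => ?_, fun n => ?_⟩
  · have : f^[p] x = x := by simpa [hmaps.iterate_restrict] using congrArg Subtype.val hper
    rw [iterate_add_apply, this]
  · rw [iterate_succ_apply']
    exact hstep _ (hmaps.iterate n hx)

end ClosedWalk

theorem Finset.exists_injOn_of_card_filter_le {α β : Type*} [DecidableEq β] {s t : Finset α}
    {g h : α → β} (hcard : ∀ b, (s.filter (g · = b)).card ≤ (t.filter (h · = b)).card) :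
    ∃ f : α → α, InjOn f s ∧ MapsTo f s t ∧ ∀ a ∈ s, h (f a) = g a := by
  have hfiber : ∀ b, ∃ F : α → α, MapsTo F (s.filter (g · = b)) (t.filter (h · = b)) ∧
      InjOn F (s.filter (g · = b)) := by
    intro b
    rcases (s.filter (g · = b)).eq_empty_or_nonempty with he | ⟨a, -⟩
    · exact ⟨id, by simp [he, MapsTo], by simp [he]⟩
    · have : Nonempty α := ⟨a⟩
      refine Set.Finite.exists_injOn_of_encard_le (t := (t.filter (h · = b) : Set α))
        (s.filter (g · = b)).finite_toSet ?_
      simpa only [Set.encard_coe_eq_coe_finsetCard, Nat.cast_le] using hcard b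
  choose F hFmaps hFinj using hfiber
  have hF : ∀ a ∈ s, F (g a) a ∈ t ∧ h (F (g a) a) = g a := fun a ha => by
    simpa using hFmaps (g a) (by simpa using ha)
  refine ⟨fun a => F (g a) a, fun a ha a' ha' heq => ?_, fun a ha => (hF a ha).1,
    fun a ha => (hF a ha).2⟩
  have hg : g a = g a' := by
    rw [← (hF a ha).2, ← (hF a' ha').2]
    exact congrArg h heq
  exact hFinj (g a) (by simpa using ha) (by simpa [hg] using ha') (by simpa [hg] using heq)

section Matching

variable {P : MPrefs S C} {q : C → ℕ} {μ μ' : S → Option C}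

@[simp]
theorem mem_assignedSet {c : C} {s : S} : s ∈ assignedSet μ c ↔ μ s = some c := by
  simp [assignedSet]

theorem pairwiseDisjoint_assignedSet (μ : S → Option C) (R : Set C) :
    R.PairwiseDisjoint (fun c => assignedSet μ c) := fun _ _ _ _ hcd =>
  Finset.disjoint_left.2 fun _ hb hb' =>
    hcd (Option.some_injective _ ((mem_assignedSet.1 hb).symm.trans (mem_assignedSet.1 hb')))

def improvers (P : MPrefs S C) (μ μ' : S → Option C) : Finset S :=
  Finset.univ.filter fun s => P.prS s (μ s) < P.prS s (μ' s)

omit [DecidableEq S] [DecidableEq C] in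
@[simp]
theorem mem_improvers {s : S} : s ∈ improvers P μ μ' ↔ P.prS s (μ s) < P.prS s (μ' s) := by
  simp [improvers]

theorem MIndivRational.exists_eq_some_of_lt (hμ : MIndivRational P q μ) {s : S} {o : Option C}
    (h : P.prS s (μ s) < P.prS s o) : ∃ c, o = some c := by
  refine Option.ne_none_iff_exists'.1 fun ho => ?_
  subst ho
  cases hs : μ s with
  | none => simp [hs] at h
  | some c => exact (hμ.1 s c hs).1.not_gt (hs ▸ h)

theorem MStable.card_assignedSet_eq (hμ : MStable P q μ) {s : S} {c : C}
    (hc : P.prC c none < P.prC c (some s)) (hs : P.prS s (μ s) < P.prS s (some c)) :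
    (assignedSet μ c).card = q c :=
  (hμ.1.2 c).antisymm (not_lt.1 fun hlt => hμ.2 s c ⟨hs, Or.inr ⟨hc, hlt⟩⟩)

theorem MStable.prC_lt_of_mem (hμ : MStable P q μ) {s b : S} {c : C}
    (hs : P.prS s (μ s) < P.prS s (some c)) (hb : b ∈ assignedSet μ c) :
    P.prC c (some s) < P.prC c (some b) := by
  refine (not_lt.1 fun hlt => hμ.2 s c ⟨hs, Or.inl ⟨b, hb, hlt⟩⟩).lt_of_ne fun he => ?_
  obtain rfl := Option.some_injective _ (P.injC c he)
  rw [mem_assignedSet.1 hb] at hs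
  exact hs.false

theorem mem_improvers_of_mem_sdiff (hμ : MStable P q μ) (hμ' : MStable P q μ') {a b : S}
    {c : C} (ha : a ∈ improvers P μ μ') (hac : μ' a = some c)
    (hb : b ∈ assignedSet μ c \ assignedSet μ' c) :
    b ∈ improvers P μ μ' := by
  obtain ⟨hbμ, hbμ'⟩ := Finset.mem_sdiff.1 hb
  rw [mem_improvers, mem_assignedSet.1 hbμ]
  by_contra hle
  have hne : P.prS b (μ' b) ≠ P.prS b (some c) := fun he =>
    hbμ' (mem_assignedSet.2 (P.injS b he))
  refine hμ'.2 b c ⟨(not_lt.1 hle).lt_of_ne hne, Or.inl ⟨a, mem_assignedSet.2 hac, ?_⟩⟩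
  exact hμ.prC_lt_of_mem (hac ▸ mem_improvers.1 ha) hbμ

theorem card_assignedSet_eq_of_mem_improvers (hμ : MStable P q μ) (hμ' : MIndivRational P q μ')
    {a : S} {c : C} (ha : a ∈ improvers P μ μ') (hac : μ' a = some c) :
    (assignedSet μ c).card = q c :=
  hμ.card_assignedSet_eq (hμ'.1 a c hac).2 (hac ▸ mem_improvers.1 ha)

theorem card_filter_improvers_le (hμ : MStable P q μ) (hμ' : MStable P q μ') (o : Option C) :
    ((improvers P μ μ').filter (μ' · = o)).card ≤ ((improvers P μ μ').filter (μ · = o)).card := by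
  rcases ((improvers P μ μ').filter (μ' · = o)).eq_empty_or_nonempty with he | ⟨a, hao⟩
  · simp [he]
  obtain ⟨ha, rfl⟩ := Finset.mem_filter.1 hao
  obtain ⟨c, hac⟩ := hμ.1.exists_eq_some_of_lt (mem_improvers.1 ha)
  rw [hac]
  calc ((improvers P μ μ').filter (μ' · = some c)).card
      ≤ (assignedSet μ' c \ assignedSet μ c).card := by
        refine Finset.card_le_card fun b hb => ?_
        obtain ⟨hb, hbc⟩ := Finset.mem_filter.1 hb
        refine Finset.mem_sdiff.2 ⟨mem_assignedSet.2 hbc, fun hbc' => ?_⟩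
        rw [mem_improvers, hbc, mem_assignedSet.1 hbc'] at hb
        exact hb.false
    _ ≤ (assignedSet μ c \ assignedSet μ' c).card := by
        rw [Finset.card_sdiff_le_card_sdiff_iff,
          card_assignedSet_eq_of_mem_improvers hμ hμ'.1 ha hac]
        exact hμ'.1.2 c
    _ ≤ ((improvers P μ μ').filter (μ · = some c)).card := by
        refine Finset.card_le_card fun b hb => Finset.mem_filter.2 ⟨?_, ?_⟩
        · exact mem_improvers_of_mem_sdiff hμ hμ' ha hac hb
        · exact mem_assignedSet.1 (Finset.mem_sdiff.1 hb).1

theorem card_assignedSet_eq_of_biUnion_subset {R : Finset C}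
    (hfull : ∀ c ∈ R, (assignedSet μ c).card = q c) (hcap : ∀ c, (assignedSet μ' c).card ≤ q c)
    (hsub : R.biUnion (fun c => assignedSet μ c) ⊆ R.biUnion (fun c => assignedSet μ' c))
    {c : C} (hc : c ∈ R) :
    (assignedSet μ' c).card = q c := by
  have hsum : ∑ c ∈ R, q c ≤ ∑ c ∈ R, (assignedSet μ' c).card := calc
    ∑ c ∈ R, q c = (R.biUnion (fun c => assignedSet μ c)).card := by
      rw [Finset.card_biUnion (pairwiseDisjoint_assignedSet μ _)]
      exact Finset.sum_congr rfl fun c hc => (hfull c hc).symm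
    _ ≤ (R.biUnion (fun c => assignedSet μ' c)).card := Finset.card_le_card hsub
    _ = ∑ c ∈ R, (assignedSet μ' c).card :=
      Finset.card_biUnion (pairwiseDisjoint_assignedSet μ' _)
  exact (Finset.sum_eq_sum_iff_of_le fun c _ => hcap c).1
    ((Finset.sum_le_sum fun c _ => hcap c).antisymm hsum) c hc

theorem card_assignedSet_eq_of_mem_improvers' (hμ : MStable P q μ) (hμ' : MStable P q μ')
    {a : S} {c : C} (ha : a ∈ improvers P μ μ') (hac : μ' a = some c) :
    (assignedSet μ' c).card = q c := by
  set R := (improvers P μ μ').biUnion fun a => (μ' a).toFinset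
  have hR : ∀ {c}, c ∈ R ↔ ∃ a ∈ improvers P μ μ', μ' a = some c := by simp [R]
  refine card_assignedSet_eq_of_biUnion_subset (μ := μ) (R := R) (fun c hc => ?_) hμ'.1.2
    (fun b hb => ?_) (hR.2 ⟨a, ha, hac⟩)
  · obtain ⟨a, ha, hac⟩ := hR.1 hc
    exact card_assignedSet_eq_of_mem_improvers hμ hμ'.1 ha hac
  · simp only [Finset.mem_biUnion] at hb ⊢
    obtain ⟨c, hc, hbc⟩ := hb
    by_cases hbc' : b ∈ assignedSet μ' c
    · exact ⟨c, hc, hbc'⟩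
    obtain ⟨a, ha, hac⟩ := hR.1 hc
    have hb := mem_improvers_of_mem_sdiff hμ hμ' ha hac (Finset.mem_sdiff.2 ⟨hbc, hbc'⟩)
    obtain ⟨c', hc'⟩ := hμ.1.exists_eq_some_of_lt (mem_improvers.1 hb)
    exact ⟨c', hR.2 ⟨b, hb, hc'⟩, mem_assignedSet.2 hc'⟩

end Matching

/-- **Lemma 3.** If μ, μ' are stable many-to-one matchings and student s strictly
prefers μ'(s) to μ(s), then s lies on a preference cycle s₀c₀s₁c₁…s_k c_k s₀
(all agents distinct, each preferring its successor to its predecessor) which is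
(S,μ)-dominated and (S,μ')-dominating, and every college on the cycle is filled
to full capacity in both μ and μ'. -/
theorem stmt7 (P : MPrefs S C) (q : C → ℕ) (μ μ' : S → Option C)
    (hμ : MStable P q μ) (hμ' : MStable P q μ')
    (s : S) (h : P.prS s (μ s) < P.prS s (μ' s)) :
    ∃ (k : ℕ) (ss : Fin (k + 1) → S) (cs : Fin (k + 1) → C),
      Function.Injective ss ∧ Function.Injective cs ∧
      (∀ i, P.prS (ss i) (some (cs (i - 1))) < P.prS (ss i) (some (cs i))) ∧
      (∀ i, P.prC (cs i) (some (ss i)) < P.prC (cs i) (some (ss (i + 1)))) ∧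
      (∃ i, ss i = s) ∧
      (∀ i, μ (ss i) = some (cs (i - 1))) ∧
      (∀ i, μ' (ss i) = some (cs i)) ∧
      (∀ i, (assignedSet μ (cs i)).card = q (cs i) ∧
            (assignedSet μ' (cs i)).card = q (cs i)) := by
  have hs : s ∈ improvers P μ μ' := mem_improvers.2 h
  obtain ⟨f, hf_inj, hf_maps, hf_src⟩ :=
    Finset.exists_injOn_of_card_filter_le (card_filter_improvers_le hμ hμ')
  obtain ⟨p, hw⟩ := exists_isClosedWalk_iterate (src := μ) hf_inj hf_maps
    (fun a ha => (hf_src a ha).symm) hs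
  obtain ⟨k, ss, hinj, hchain, hs0, hrange⟩ := hw.exists_simple_cycle
  have hT : ∀ i, ss i ∈ improvers P μ μ' := fun i => by
    obtain ⟨n, hn⟩ := hrange i
    exact hn ▸ hf_maps.iterate n hs
  choose cs hcs using fun i => hμ.1.exists_eq_some_of_lt (mem_improvers.1 (hT i))
  have hprev : ∀ i, μ (ss i) = some (cs (i - 1)) := fun i => by
    rw [← hcs, hchain, sub_add_cancel]
  refine ⟨k, ss, cs, fun i j hij => hinj (congrArg μ' hij),
    fun i j hij => hinj (by simp [hcs, hij]), fun i => ?_, fun i => ?_, ⟨0, hs0⟩, hprev, hcs,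
    fun i => ⟨?_, ?_⟩⟩
  · simpa [hprev, hcs] using mem_improvers.1 (hT i)
  · refine hμ.prC_lt_of_mem (hcs i ▸ mem_improvers.1 (hT i)) (mem_assignedSet.2 ?_)
    rw [hprev, add_sub_cancel_right]
  · exact card_assignedSet_eq_of_mem_improvers hμ hμ'.1 (hT i) (hcs i)
  · exact card_assignedSet_eq_of_mem_improvers' hμ hμ' (hT i) (hcs i)
end

section
/- In a many-to-one market with responsive preferences, if μ and μ' are stable matchings then every student s satisfies μ(s) = ∅ if and only if μ'(s) = ∅. -/
/-! Many-to-one matching framework (students `S` and colleges `C`).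

Each student has a strict preference order over `C ∪ {∅}` and each college a
strict (responsive) ranking of `S ∪ {∅}`, both encoded by injective rank
functions into `ℕ` (larger = more preferred); `none` is the outside option.
A matching is a function `μ : S → Option C`; the set of students assigned to a
college is recovered by `assignedSet`. -/

variable {S C : Type*} [Fintype S] [DecidableEq S] [DecidableEq C]

/-!
Let `T` be the set of students who strictly prefer `μ` to `μ'`. If `t ∈ T` and `c = μ t`, then
`t` would block `μ'` with `c` unless `c` is full in `μ'` and prefers all its `μ'`-students to `t`;
so any student who enters `c` in `μ'` without being there in `μ` would block `μ` with `c` unless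
that student is in `T` too. Over the colleges `μ(T)`, each holding at least as many students in `μ'`
as in `μ`, the students leaving (which include `T`) are thus no more than those entering (which
lie in `T`): both sets equal `T`, so every student of `T` is matched in `μ'`. A student unmatched in
`μ` but matched in `μ'` would be such a student with the roles of `μ` and `μ'` exchanged.
-/

section Counting

open Finset

variable {α β : Type*} [Fintype α] [DecidableEq β]

theorem card_filter_mem_le_of_card_fiber_le (f g : α → β) (D : Finset β)
    (h : ∀ b ∈ D, #{a | f a = b} ≤ #{a | g a = b}) :
    #{a | f a ∈ D} ≤ #{a | g a ∈ D} := by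
  rw [card_eq_sum_card_fiberwise (s := {a | f a ∈ D}) (f := f) fun a ha => by simpa using ha,
    card_eq_sum_card_fiberwise (s := {a | g a ∈ D}) (f := g) fun a ha => by simpa using ha]
  refine sum_le_sum fun b hb => ?_
  have fiber (k : α → β) : #{a ∈ {a | k a ∈ D} | k a = b} = #{a | k a = b} := by
    congr 1
    ext a
    simp only [mem_filter, mem_univ, true_and]
    exact ⟨And.right, fun hab => ⟨hab ▸ hb, hab⟩⟩
  rw [fiber f, fiber g]
  exact h b hb

theorem card_filter_mem_ne_le_of_card_filter_mem_le (f g : α → β) (D : Finset β)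
    (h : #{a | f a ∈ D} ≤ #{a | g a ∈ D}) :
    #{a | f a ∈ D ∧ ¬f a = g a} ≤ #{a | g a ∈ D ∧ ¬f a = g a} := by
  have hf := card_filter_add_card_filter_not (s := {a | f a ∈ D}) (fun a => f a = g a)
  have hg := card_filter_add_card_filter_not (s := {a | g a ∈ D}) (fun a => f a = g a)
  have hcommon : #{a | f a ∈ D ∧ f a = g a} = #{a | g a ∈ D ∧ f a = g a} := by
    congr 1
    ext a
    simp only [mem_filter, mem_univ, true_and]
    exact ⟨fun ⟨hD, he⟩ => ⟨he ▸ hD, he⟩, fun ⟨hD, he⟩ => ⟨he ▸ hD, he⟩⟩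
  simp only [filter_filter] at hf hg
  rw [hcommon] at hf
  omega

end Counting

variable {P : MPrefs S C} {q : C → ℕ} {μ μ' : S → Option C}

theorem MIndivRational.prS_none_le (hμ : MIndivRational P q μ) (s : S) :
    P.prS s none ≤ P.prS s (μ s) := by
  cases h : μ s with
  | none => exact le_rfl
  | some c => exact (hμ.1 s c h).1.le

namespace MStable

open Finset

variable {s t : S} {c : C}

theorem card_assignedSet_eq_s8 (hμ : MStable P q μ) (hs : P.prS s (μ s) < P.prS s (some c))
    (hc : P.prC c none < P.prC c (some s)) : (assignedSet μ c).card = q c := by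
  have hnb := hμ.2 s c
  have := hμ.1.2 c
  simp only [MBlocks, not_and, not_or] at hnb
  have := (hnb hs).2
  omega

theorem prC_lt_of_mem_assignedSet (hμ : MStable P q μ) (hs : P.prS s (μ s) < P.prS s (some c))
    (ht : t ∈ assignedSet μ c) : P.prC c (some s) < P.prC c (some t) := by
  have hnb := hμ.2 s c
  simp only [MBlocks, not_and, not_or, not_exists, not_lt] at hnb
  have hts : t ≠ s := by
    rintro rfl
    simp only [assignedSet, mem_filter, mem_univ, true_and] at ht
    exact hs.ne (by rw [ht])
  refine lt_of_le_of_ne ((hnb hs).1 t ht) fun h => hts ?_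
  exact (Option.some_inj.1 (P.injC c h)).symm

theorem prS_lt_of_eq_some_of_ne (hμ : MStable P q μ) (hμ' : MStable P q μ')
    (htc : μ t = some c) (ht : P.prS t (μ' t) < P.prS t (some c)) (hsc : μ' s = some c)
    (hs : μ s ≠ some c) : P.prS s (some c) < P.prS s (μ s) := by
  by_contra! hle
  have hlt : P.prS s (μ s) < P.prS s (some c) :=
    lt_of_le_of_ne hle fun h => hs (P.injS s h)
  have hsμ' : s ∈ assignedSet μ' c := by simp [assignedSet, hsc]
  have htμ : t ∈ assignedSet μ c := by simp [assignedSet, htc]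
  exact hμ.2 s c ⟨hlt, Or.inl ⟨t, htμ, prC_lt_of_mem_assignedSet hμ' ht hsμ'⟩⟩

theorem ne_none_of_prS_lt (hμ : MStable P q μ) (hμ' : MStable P q μ') {s : S}
    (hs : P.prS s (μ' s) < P.prS s (μ s)) : μ' s ≠ none := by
  set T : Finset S := {t | P.prS t (μ' t) < P.prS t (μ t)}
  set D := T.image μ
  have hD : ∀ o ∈ D, ∃ t c, μ t = some c ∧ o = some c ∧ P.prS t (μ' t) < P.prS t (some c) := by
    simp only [D, T, mem_image, mem_filter, mem_univ, true_and]
    rintro o ⟨t, ht, rfl⟩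
    cases htc : μ t with
    | none => exact absurd (htc ▸ ht) (hμ'.1.prS_none_le t).not_gt
    | some c => exact ⟨t, c, htc, rfl, htc ▸ ht⟩
  have hfiber : ∀ o ∈ D, #{a | μ a = o} ≤ #{a | μ' a = o} := by
    intro o ho
    obtain ⟨t, c, htc, rfl, ht⟩ := hD o ho
    calc #{a | μ a = some c} ≤ q c := hμ.1.2 c
      _ = #{a | μ' a = some c} := (hμ'.card_assignedSet_eq_s8 ht (hμ.1.1 t c htc).2).symm
  have hout : T ⊆ ({a | μ a ∈ D ∧ ¬μ a = μ' a} : Finset S) := fun t ht => by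
    have htT : P.prS t (μ' t) < P.prS t (μ t) := by simpa [T] using ht
    simp only [mem_filter, mem_univ, true_and]
    exact ⟨mem_image_of_mem μ ht, fun h => (h ▸ htT).false⟩
  have hin : ({a | μ' a ∈ D ∧ ¬μ a = μ' a} : Finset S) ⊆ T := fun a ha => by
    simp only [mem_filter, mem_univ, true_and] at ha
    obtain ⟨t, c, htc, hc, ht⟩ := hD _ ha.1
    simpa [T, hc] using hμ.prS_lt_of_eq_some_of_ne hμ' htc ht hc (hc ▸ ha.2)
  have hin_eq := eq_of_subset_of_card_le hin <| (card_le_card hout).trans <|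
    card_filter_mem_ne_le_of_card_filter_mem_le μ μ' D <|
      card_filter_mem_le_of_card_fiber_le μ μ' D hfiber
  have hsD : μ' s ∈ D := by
    have : s ∈ T := by simpa [T] using hs
    rw [← hin_eq] at this
    exact (mem_filter.1 this).2.1
  obtain ⟨_, c, -, hc, -⟩ := hD _ hsD
  simp [hc]

theorem eq_none_of_eq_none (hμ : MStable P q μ) (hμ' : MStable P q μ') {s : S}
    (hs : μ s = none) : μ' s = none := by
  cases hc : μ' s with
  | none => rfl
  | some c =>
    have hlt : P.prS s (μ s) < P.prS s (μ' s) := by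
      rw [hs, hc]
      exact (hμ'.1.1 s c hc).1
    exact absurd hs (hμ'.ne_none_of_prS_lt hμ hlt)

end MStable

/-- **Rural Hospitals, part 1.** Two stable many-to-one matchings leave the same
students unmatched. -/
theorem stmt8 (P : MPrefs S C) (q : C → ℕ) (μ μ' : S → Option C)
    (hμ : MStable P q μ) (hμ' : MStable P q μ') :
    ∀ s : S, μ s = none ↔ μ' s = none :=
  fun _ => ⟨hμ.eq_none_of_eq_none hμ', hμ'.eq_none_of_eq_none hμ⟩
end

section
/- In a many-to-one market with responsive preferences, if μ and μ' are stable matchings then every college c is assigned the same number of students in both: |μ(c)| = |μ'(c)|. -/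
/-! Many-to-one matching framework (students `S` and colleges `C`).

Each student has a strict preference order over `C ∪ {∅}` and each college a
strict (responsive) ranking of `S ∪ {∅}`, both encoded by injective rank
functions into `ℕ` (larger = more preferred); `none` is the outside option.
A matching is a function `μ : S → Option C`; the set of students assigned to a
college is recovered by `assignedSet`. -/

variable {S C : Type*} [Fintype S] [DecidableEq S] [DecidableEq C]

lemma rh_key (P : MPrefs S C) (q : C → ℕ) (μ μ' ν : S → Option C)
    (hμ : MStable P q μ) (hμ' : MStable P q μ')
    (h1 : ∀ s, ν s = μ s ∨ ν s = μ' s)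
    (h2 : ∀ s, P.prS s (μ s) ≤ P.prS s (ν s))
    (h2' : ∀ s, P.prS s (μ' s) ≤ P.prS s (ν s)) (c : C) :
    (assignedSet ν c).card ≤ (assignedSet μ c).card := by
  by_contra hlt
  push_neg at hlt
  -- there is a student in ν(c) \ μ(c)
  have hBne : ((assignedSet ν c) \ (assignedSet μ c)).Nonempty := by
    rw [Finset.sdiff_nonempty]
    intro hsub
    exact absurd (Finset.card_le_card hsub) (not_le.mpr hlt)
  obtain ⟨s, hsmem⟩ := hBne
  rw [Finset.mem_sdiff] at hsmem
  have hsν : ν s = some c := (Finset.mem_filter.mp hsmem.1).2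
  have hsμ : μ s ≠ some c := fun h =>
    hsmem.2 (Finset.mem_filter.mpr ⟨Finset.mem_univ s, h⟩)
  have hsμ' : μ' s = some c := by
    rcases h1 s with h | h
    · exact absurd (h ▸ hsν : μ s = some c) hsμ
    · exact h ▸ hsν
  have spref : P.prS s (μ s) < P.prS s (some c) := by
    have h := h2 s
    rw [hsν] at h
    exact lt_of_le_of_ne h (fun he => hsμ (P.injS s he))
  have sacc : P.prC c none < P.prC c (some s) := (hμ'.1.1 s c hsμ').2
  -- everyone in μ(c) is preferred (by c) to s
  have hall : ∀ t ∈ assignedSet μ c, P.prC c (some s) < P.prC c (some t) := by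
    intro t ht
    by_contra hle
    push_neg at hle
    have hts : t ≠ s := fun h => hsμ (h ▸ (Finset.mem_filter.mp ht).2)
    have : P.prC c (some t) < P.prC c (some s) :=
      lt_of_le_of_ne hle (fun he => hts (Option.some_injective S (P.injC c he)))
    exact hμ.2 s c ⟨spref, Or.inl ⟨t, ht, this⟩⟩
  -- μ(c) is full
  have hfull : q c ≤ (assignedSet μ c).card := by
    by_contra h
    push_neg at h
    exact hμ.2 s c ⟨spref, Or.inr ⟨sacc, h⟩⟩
  have hνq : q c < (assignedSet ν c).card := lt_of_le_of_lt hfull hlt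
  -- some student of ν(c) comes from μ(c) but is not in μ'(c)
  have hAB : ∃ t ∈ assignedSet ν c, μ t = some c ∧ μ' t ≠ some c := by
    by_contra h
    push_neg at h
    have hsub : assignedSet ν c ⊆ assignedSet μ' c := by
      intro t ht
      by_cases hm : μ t = some c
      · exact Finset.mem_filter.mpr ⟨Finset.mem_univ t, h t ht hm⟩
      · have htν : ν t = some c := (Finset.mem_filter.mp ht).2
        rcases h1 t with he | he
        · exact absurd (he ▸ htν : μ t = some c) hm
        · exact Finset.mem_filter.mpr ⟨Finset.mem_univ t, he ▸ htν⟩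
    have hc1 := Finset.card_le_card hsub
    have hc2 := hμ'.1.2 c
    omega
  obtain ⟨t, htν, htμ, htμ'⟩ := hAB
  have tpref : P.prS t (μ' t) < P.prS t (some c) := by
    have h := h2' t
    rw [(Finset.mem_filter.mp htν).2] at h
    exact lt_of_le_of_ne h (fun he => htμ' (P.injS t he))
  have hall' : ∀ u ∈ assignedSet μ' c, P.prC c (some t) < P.prC c (some u) := by
    intro u hu
    by_contra hle
    push_neg at hle
    have hut : u ≠ t := fun h => htμ' (h ▸ (Finset.mem_filter.mp hu).2)
    have : P.prC c (some u) < P.prC c (some t) :=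
      lt_of_le_of_ne hle (fun he => hut (Option.some_injective S (P.injC c he)))
    exact hμ'.2 t c ⟨tpref, Or.inl ⟨u, hu, this⟩⟩
  have h3 := hall t (Finset.mem_filter.mpr ⟨Finset.mem_univ t, htμ⟩)
  have h4 := hall' s (Finset.mem_filter.mpr ⟨Finset.mem_univ s, hsμ'⟩)
  exact lt_asymm h3 h4

lemma rh_matched_card (ν : S → Option C) (T : Finset C)
    (hT : ∀ s c, ν s = some c → c ∈ T) :
    (Finset.univ.filter (fun s => ν s ≠ none)).card
      = ∑ c ∈ T, (assignedSet ν c).card := by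
  rw [← Finset.card_biUnion]
  · congr 1
    ext s
    simp only [Finset.mem_filter, Finset.mem_univ, true_and, Finset.mem_biUnion, assignedSet]
    constructor
    · intro h
      cases hν : ν s with
      | none => exact absurd hν h
      | some c => exact ⟨c, hT s c hν, rfl⟩
    · rintro ⟨c, _, hc⟩
      simp [hc]
  · intro c1 _ c2 _ hne
    apply Finset.disjoint_left.mpr
    intro s h1 h2
    simp only [assignedSet, Finset.mem_filter] at h1 h2
    exact hne (Option.some_injective C (h1.2 ▸ h2.2))

/-- **Rural Hospitals, part 2.** Every college fills the same number of seats in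
any two stable many-to-one matchings. -/
theorem stmt9 (P : MPrefs S C) (q : C → ℕ) (μ μ' : S → Option C)
    (hμ : MStable P q μ) (hμ' : MStable P q μ') :
    ∀ c : C, (assignedSet μ c).card = (assignedSet μ' c).card := by
  classical
  set lam : S → Option C := fun s => if P.prS s (μ s) < P.prS s (μ' s) then μ' s else μ s
    with hlam
  have h1 : ∀ s, lam s = μ s ∨ lam s = μ' s := by
    intro s
    by_cases h : P.prS s (μ s) < P.prS s (μ' s) <;> simp [hlam, h]
  have h2 : ∀ s, P.prS s (μ s) ≤ P.prS s (lam s) := by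
    intro s
    by_cases h : P.prS s (μ s) < P.prS s (μ' s) <;> simp [hlam, h]
    exact h.le
  have h2' : ∀ s, P.prS s (μ' s) ≤ P.prS s (lam s) := by
    intro s
    by_cases h : P.prS s (μ s) < P.prS s (μ' s) <;> simp [hlam, h]
    exact le_of_not_gt h
  have key1 : ∀ c, (assignedSet lam c).card ≤ (assignedSet μ c).card :=
    rh_key P q μ μ' lam hμ hμ' h1 h2 h2'
  have key2 : ∀ c, (assignedSet lam c).card ≤ (assignedSet μ' c).card :=
    rh_key P q μ' μ lam hμ' hμ (fun s => (h1 s).symm) h2' h2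
  set T : Finset C := Finset.univ.biUnion (fun s => (μ s).toFinset ∪ (μ' s).toFinset) with hT
  have hTμ : ∀ s c, μ s = some c → c ∈ T := by
    intro s c h
    simp only [hT, Finset.mem_biUnion, Finset.mem_union, Option.mem_toFinset]
    exact ⟨s, Finset.mem_univ s, Or.inl (by simp [h])⟩
  have hTμ' : ∀ s c, μ' s = some c → c ∈ T := by
    intro s c h
    simp only [hT, Finset.mem_biUnion, Finset.mem_union, Option.mem_toFinset]
    exact ⟨s, Finset.mem_univ s, Or.inr (by simp [h])⟩
  have hTlam : ∀ s c, lam s = some c → c ∈ T := by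
    intro s c h
    rcases h1 s with he | he
    · exact hTμ s c (he ▸ h)
    · exact hTμ' s c (he ▸ h)
  have hsμ := rh_matched_card μ T hTμ
  have hsμ' := rh_matched_card μ' T hTμ'
  have hslam := rh_matched_card lam T hTlam
  have hsub : (Finset.univ.filter (fun s => μ s ≠ none))
      ⊆ (Finset.univ.filter (fun s => lam s ≠ none)) := by
    intro s hs
    simp only [Finset.mem_filter, Finset.mem_univ, true_and] at hs ⊢
    cases hm : μ s with
    | none => exact absurd hm hs
    | some c =>
      intro hl
      have ha := h2 s
      rw [hm, hl] at ha
      have hb := (hμ.1.1 s c hm).1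
      omega
  have hsub' : (Finset.univ.filter (fun s => μ' s ≠ none))
      ⊆ (Finset.univ.filter (fun s => lam s ≠ none)) := by
    intro s hs
    simp only [Finset.mem_filter, Finset.mem_univ, true_and] at hs ⊢
    cases hm : μ' s with
    | none => exact absurd hm hs
    | some c =>
      intro hl
      have ha := h2' s
      rw [hm, hl] at ha
      have hb := (hμ'.1.1 s c hm).1
      omega
  have hle1 : ∑ c ∈ T, (assignedSet μ c).card ≤ ∑ c ∈ T, (assignedSet lam c).card := by
    rw [← hsμ, ← hslam]
    exact Finset.card_le_card hsub
  have hle2 : ∑ c ∈ T, (assignedSet μ' c).card ≤ ∑ c ∈ T, (assignedSet lam c).card := by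
    rw [← hsμ', ← hslam]
    exact Finset.card_le_card hsub'
  have heq1 : ∀ c ∈ T, (assignedSet lam c).card = (assignedSet μ c).card := by
    have hsum : ∑ c ∈ T, (assignedSet lam c).card = ∑ c ∈ T, (assignedSet μ c).card :=
      le_antisymm (Finset.sum_le_sum (fun c _ => key1 c)) hle1
    exact fun c hc =>
      (Finset.sum_eq_sum_iff_of_le (fun c _ => key1 c)).mp hsum c hc
  have heq2 : ∀ c ∈ T, (assignedSet lam c).card = (assignedSet μ' c).card := by
    have hsum : ∑ c ∈ T, (assignedSet lam c).card = ∑ c ∈ T, (assignedSet μ' c).card :=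
      le_antisymm (Finset.sum_le_sum (fun c _ => key2 c)) hle2
    exact fun c hc =>
      (Finset.sum_eq_sum_iff_of_le (fun c _ => key2 c)).mp hsum c hc
  intro c
  by_cases hc : c ∈ T
  · rw [← heq1 c hc, heq2 c hc]
  · have e1 : assignedSet μ c = ∅ :=
      Finset.eq_empty_of_forall_notMem fun s hs =>
        hc (hTμ s c (Finset.mem_filter.mp hs).2)
    have e2 : assignedSet μ' c = ∅ :=
      Finset.eq_empty_of_forall_notMem fun s hs =>
        hc (hTμ' s c (Finset.mem_filter.mp hs).2)
    rw [e1, e2]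
end

section
/- Let μ and μ' be two stable one-to-one matchings on M ∪ W, and let m ∈ M with μ(m) ≠ μ'(m). If m strictly prefers μ'(m) to μ(m), then the woman w = μ'(m) strictly prefers μ(w) to μ'(w) = m. -/
/-! One-to-one matching framework.

`Matching M W` pairs men with women (or the outside option `none`), consistently.
Preferences are encoded by injective rank functions into `ℕ`
(a larger rank means more preferred); `none` is the outside option `∅`. -/

structure Matching (M W : Type*) where
  mu : M → Option W
  nu : W → Option M
  consistent : ∀ m w, mu m = some w ↔ nu w = some m

structure Prefs (M W : Type*) where
  prM : M → Option W → ℕ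
  prW : W → Option M → ℕ
  injM : ∀ m, Function.Injective (prM m)
  injW : ∀ w, Function.Injective (prW w)

variable {M W : Type*}

/-- `m` strictly prefers `x` to `y`. -/
def PrefM (P : Prefs M W) (m : M) (x y : Option W) : Prop := P.prM m y < P.prM m x

/-- `w` strictly prefers `x` to `y`. -/
def PrefW (P : Prefs M W) (w : W) (x y : Option M) : Prop := P.prW w y < P.prW w x

def IndivRational (P : Prefs M W) (μ : Matching M W) : Prop :=
  (∀ m w, μ.mu m = some w → PrefM P m (some w) none) ∧
  (∀ w m, μ.nu w = some m → PrefW P w (some m) none)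

def Blocks (P : Prefs M W) (μ : Matching M W) (m : M) (w : W) : Prop :=
  PrefM P m (some w) (μ.mu m) ∧ PrefW P w (some m) (μ.nu w)

def Stable (P : Prefs M W) (μ : Matching M W) : Prop :=
  IndivRational P μ ∧ ∀ m w, ¬ Blocks P μ m w

/-- A preference cycle `m₀ w₀ m₁ w₁ … m_k w_k m₀`: all agents distinct,
alternating between `M` and `W`; the successor of `m i` is `w i`, the
predecessor of `m i` is `w (i-1)`; the successor of `w i` is `m (i+1)`,
the predecessor of `w i` is `m i` (indices cyclic in `Fin (k+1)`).
Every agent strictly prefers its successor to its predecessor. -/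
def PrefCycle (P : Prefs M W) {k : ℕ} (ms : Fin (k + 1) → M) (ws : Fin (k + 1) → W) : Prop :=
  Function.Injective ms ∧ Function.Injective ws ∧
  (∀ i, PrefM P (ms i) (some (ws i)) (some (ws (i - 1)))) ∧
  (∀ i, PrefW P (ws i) (some (ms (i + 1))) (some (ms i))) 

/-- Opposition of interests: if a man strictly improves from μ to μ', then his
μ'-partner strictly prefers her μ-partner to him. -/
theorem stmt13 (P : Prefs M W) (μ μ' : Matching M W)
    (hμ : Stable P μ) (hμ' : Stable P μ')
    (m : M) (w : W) (hm : μ'.mu m = some w)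
    (hpref : PrefM P m (some w) (μ.mu m)) :
    PrefW P w (μ.nu w) (some m) := by
  have hnb := hμ.2 m w
  have hle : ¬ PrefW P w (some m) (μ.nu w) := fun h => hnb ⟨hpref, h⟩
  have hne : μ.nu w ≠ some m := by
    intro h
    have : μ.mu m = some w := (μ.consistent m w).mpr h
    rw [this] at hpref
    exact lt_irrefl _ hpref
  have : P.prW w (μ.nu w) ≠ P.prW w (some m) := fun h => hne (P.injW w h)
  unfold PrefW at *
  omega
end

section
/- In a many-to-one market with responsive preferences, suppose μ and μ' are stable matchings with |μ(c)| > |μ'(c)| for some college c. Then there exists a student s with μ(s) = c and μ'(s) ≠ c such that s strictly prefers μ'(s) to c; consequently |μ(c)| > |μ'(c)| is impossible, since such an s would lie on a preference cycle through c that requires c to be at full capacity in μ', contradicting |μ'(c)| < |μ(c)| ≤ q_c. -/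
/-! Many-to-one matching framework (students `S` and colleges `C`).

Each student has a strict preference order over `C ∪ {∅}` and each college a
strict (responsive) ranking of `S ∪ {∅}`, both encoded by injective rank
functions into `ℕ` (larger = more preferred); `none` is the outside option.
A matching is a function `μ : S → Option C`; the set of students assigned to a
college is recovered by `assignedSet`. -/

variable {S C : Type*} [Fintype S] [DecidableEq S] [DecidableEq C]

/-- If |μ(c)| > |μ'(c)| for stable matchings μ, μ', then there is a student
matched to c under μ but not under μ' who strictly prefers μ'(s) to c. -/
theorem stmt17 (P : MPrefs S C) (q : C → ℕ) (μ μ' : S → Option C)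
    (hμ : MStable P q μ) (hμ' : MStable P q μ')
    (c : C) (h : (assignedSet μ' c).card < (assignedSet μ c).card) :
    ∃ s : S, μ s = some c ∧ μ' s ≠ some c ∧ P.prS s (some c) < P.prS s (μ' s) := by
  -- There is some student in μ(c) \ μ'(c)
  have hex : ∃ s, s ∈ assignedSet μ c ∧ s ∉ assignedSet μ' c := by
    by_contra hc
    push_neg at hc
    have : assignedSet μ c ⊆ assignedSet μ' c := fun s hs => hc s hs
    exact absurd (Finset.card_le_card this) (by omega)
  obtain ⟨s, hs, hs'⟩ := hex
  simp [assignedSet] at hs hs'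
  refine ⟨s, hs, by simp [hs'], ?_⟩
  have hnb := hμ'.2 s c
  have hirc : P.prC c none < P.prC c (some s) := (hμ.1.1 s c hs).2
  have hcap : (assignedSet μ' c).card < q c :=
    lt_of_lt_of_le h (hμ.1.2 c)
  have hle : ¬ P.prS s (μ' s) < P.prS s (some c) := by
    intro hlt
    exact hnb ⟨hlt, Or.inr ⟨hirc, hcap⟩⟩
  have hne : P.prS s (μ' s) ≠ P.prS s (some c) := by
    intro he
    exact hs' (P.injS s he)
  omega
end

section
/- Let μ and μ' be two stable one-to-one matchings on M ∪ W. Then the number of men who strictly prefer μ to μ' equals the number of women who strictly prefer μ' to μ. -/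
variable {M W : Type*} [Fintype M] [Fintype W] [DecidableEq M] [DecidableEq W]

/-! If a man prefers his `μ`-partner to his `μ'`-partner, then he has a `μ`-partner `w`
(`μ'` is individually rational), and `w` must prefer `μ'` to `μ`: otherwise `(m, w)` would block
`μ'`, or `w` would be `m`'s `μ'`-partner too. So `m ↦ μ m` injects the men preferring `μ` into
the women preferring `μ'`; exchanging the roles of men and women gives the reverse inequality. -/

def Matching.swap (μ : Matching M W) : Matching W M where
  mu := μ.nu
  nu := μ.mu
  consistent w m := (μ.consistent m w).symm

def Prefs.swap (P : Prefs M W) : Prefs W M where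
  prM := P.prW
  prW := P.prM
  injM := P.injW
  injW := P.injM

omit [Fintype M] [Fintype W] [DecidableEq M] [DecidableEq W] in
theorem Stable.swap {P : Prefs M W} {μ : Matching M W} (h : Stable P μ) :
    Stable P.swap μ.swap :=
  ⟨⟨h.1.2, h.1.1⟩, fun w m hb => h.2 m w ⟨hb.2, hb.1⟩⟩

omit [Fintype M] [Fintype W] [DecidableEq M] [DecidableEq W] in
theorem Matching.eq_of_mu_eq_some (μ : Matching M W) {m m' : M} {w : W}
    (hm : μ.mu m = some w) (hm' : μ.mu m' = some w) : m = m' :=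
  Option.some_injective _ <|
    ((μ.consistent m w).mp hm).symm.trans ((μ.consistent m' w).mp hm')

omit [Fintype M] [Fintype W] [DecidableEq M] [DecidableEq W] in
theorem IndivRational.exists_mu_eq_some {P : Prefs M W} {μ μ' : Matching M W}
    (hμ' : IndivRational P μ') {m : M} (hm : P.prM m (μ'.mu m) < P.prM m (μ.mu m)) :
    ∃ w, μ.mu m = some w := by
  cases hμm : μ.mu m with
  | some w => exact ⟨w, rfl⟩
  | none =>
    cases hμ'm : μ'.mu m with
    | none => simp [hμm, hμ'm] at hm
    | some w' =>
      have hw' : P.prM m none < P.prM m (some w') := hμ'.1 m w' hμ'm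
      rw [hμm, hμ'm] at hm
      exact absurd hm hw'.not_gt

omit [Fintype M] [Fintype W] [DecidableEq M] [DecidableEq W] in
theorem Stable.prW_lt_of_prM_lt {P : Prefs M W} {μ μ' : Matching M W} (hμ' : Stable P μ')
    {m : M} {w : W} (hmw : μ.mu m = some w) (hm : P.prM m (μ'.mu m) < P.prM m (μ.mu m)) :
    P.prW w (μ.nu w) < P.prW w (μ'.nu w) := by
  have hwm : μ.nu w = some m := (μ.consistent m w).mp hmw
  rcases lt_trichotomy (P.prW w (μ.nu w)) (P.prW w (μ'.nu w)) with hlt | heq | hgt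
  · exact hlt
  · have hμ'w : μ'.nu w = some m := (P.injW w heq).symm.trans hwm
    rw [hmw, (μ'.consistent m w).mpr hμ'w] at hm
    exact absurd hm (lt_irrefl _)
  · rw [hwm] at hgt
    rw [hmw] at hm
    exact absurd ⟨hm, hgt⟩ (hμ'.2 m w)

omit [DecidableEq M] [DecidableEq W] in
theorem card_filter_prM_lt_le {P : Prefs M W} {μ μ' : Matching M W} (hμ' : Stable P μ') :
    (Finset.univ.filter (fun m : M => P.prM m (μ'.mu m) < P.prM m (μ.mu m))).card ≤
    (Finset.univ.filter (fun w : W => P.prW w (μ.nu w) < P.prW w (μ'.nu w))).card := by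
  refine (Finset.card_le_card_of_injOn μ.mu (fun m hm => ?_) (fun m hm m' _ hmm' => ?_)).trans_eq
    (Finset.card_map Function.Embedding.some)
  · have hm := (Finset.mem_filter.mp hm).2
    obtain ⟨w, hmw⟩ := hμ'.1.exists_mu_eq_some hm
    rw [hmw]
    exact Finset.mem_map_of_mem _
      (Finset.mem_filter.mpr ⟨Finset.mem_univ w, hμ'.prW_lt_of_prM_lt hmw hm⟩)
  · obtain ⟨w, hmw⟩ := hμ'.1.exists_mu_eq_some (Finset.mem_filter.mp hm).2
    exact μ.eq_of_mu_eq_some hmw (hmm' ▸ hmw)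

/-- The number of men strictly preferring μ to μ' equals the number of women
strictly preferring μ' to μ. -/
theorem stmt18 (P : Prefs M W) (μ μ' : Matching M W)
    (hμ : Stable P μ) (hμ' : Stable P μ') :
    (Finset.univ.filter (fun m : M => P.prM m (μ'.mu m) < P.prM m (μ.mu m))).card =
    (Finset.univ.filter (fun w : W => P.prW w (μ.nu w) < P.prW w (μ'.nu w))).card :=
  le_antisymm (card_filter_prM_lt_le hμ')
    (card_filter_prM_lt_le (P := P.swap) (μ := μ'.swap) (μ' := μ.swap) hμ.swap)
end
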